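/- In a strongly Gelfand quantale, for every partial unit f the map h ↦ f*·h·f is a frame isomorphism from Q_{d(f)} = {k : k ≤ f·f*} onto Q_{r(f)} = {k : k ≤ f*·f}, with inverse k ↦ f·k·f*. -/
import Mathlib


/-- A unital involutive quantale. The multiplicative unit `1` plays the role of `e`. -/
class UIQuantale (Q : Type*) extends CompleteLattice Q, Monoid Q, StarMul Q where
  mul_sSup : ∀ (a : Q) (s : Set Q), a * sSup s = ⨆ b ∈ s, a * b
  sSup_mul : ∀ (a : Q) (s : Set Q), sSup s * a = ⨆ b ∈ s, b * a
  star_sSup : ∀ (s : Set Q), star (sSup s) = ⨆ b ∈ s, star b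

/-- A partial unit: both `f` and `star f` are functional. -/
def IsPU {Q : Type*} [UIQuantale Q] (f : Q) : Prop :=
  star f * f ≤ 1 ∧ f * star f ≤ 1

section helpers
variable {Q : Type*} [UIQuantale Q]

lemma qmul_le_left (c : Q) {a b : Q} (h : a ≤ b) : c * a ≤ c * b := by
  have hb : sSup ({a, b} : Set Q) = b := by rw [sSup_pair, sup_eq_right.mpr h]
  have key := UIQuantale.mul_sSup c ({a, b} : Set Q)
  rw [hb] at key
  rw [key]
  exact le_biSup (fun x => c * x) (Set.mem_insert a {b})

lemma qmul_le_right (c : Q) {a b : Q} (h : a ≤ b) : a * c ≤ b * c := by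
  have hb : sSup ({a, b} : Set Q) = b := by rw [sSup_pair, sup_eq_right.mpr h]
  have key := UIQuantale.sSup_mul c ({a, b} : Set Q)
  rw [hb] at key
  rw [key]
  exact le_biSup (fun x => x * c) (Set.mem_insert a {b})

lemma qmul_le_mul {a b c d : Q} (h1 : a ≤ b) (h2 : c ≤ d) : a * c ≤ b * d :=
  (qmul_le_left a h2).trans (qmul_le_right d h1)

lemma qstar_le {a b : Q} (h : a ≤ b) : star a ≤ star b := by
  have hb : sSup ({a, b} : Set Q) = b := by rw [sSup_pair, sup_eq_right.mpr h]
  have key := UIQuantale.star_sSup ({a, b} : Set Q)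
  rw [hb] at key
  rw [key]
  exact le_biSup (fun x => star x) (Set.mem_insert a {b})

/-- Key sandwich lemma: if `g` is a partial unit and `h ≤ g g*` then
`(g g*) h (g g*) = h`. -/
lemma q_sandwich (sg : ∀ a : Q, a ≤ a * star a * a) {g : Q}
    (h1 : star g * g ≤ 1) (h2 : g * star g ≤ 1) {h : Q} (hh : h ≤ g * star g) :
    (g * star g) * h * (g * star g) = h := by
  have hgg : (g * star g) * (g * star g) ≤ g * star g := by
    calc (g * star g) * (g * star g) = g * (star g * g) * star g := by simp [mul_assoc]
      _ ≤ g * 1 * star g := qmul_le_right _ (qmul_le_left _ h1)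
      _ = g * star g := by rw [mul_one]
  have hs : star h ≤ g * star g := by
    have := qstar_le hh
    rwa [star_mul, star_star] at this
  have hhs : h * star h ≤ g * star g :=
    (qmul_le_mul hh hs).trans hgg
  have hsh : star h * h ≤ g * star g :=
    (qmul_le_mul hs hh).trans hgg
  have hl : h ≤ (g * star g) * h := by
    calc h ≤ h * star h * h := sg h
      _ ≤ (g * star g) * h := qmul_le_right _ hhs
  have hr : h ≤ h * (g * star g) := by
    calc h ≤ h * star h * h := sg h
      _ = h * (star h * h) := by rw [mul_assoc]
      _ ≤ h * (g * star g) := qmul_le_left _ hsh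
  apply le_antisymm
  · calc (g * star g) * h * (g * star g) ≤ 1 * h * 1 :=
        qmul_le_mul (qmul_le_mul h2 le_rfl) h2
      _ = h := by rw [one_mul, mul_one]
  · calc h ≤ (g * star g) * h := hl
      _ ≤ (g * star g) * (h * (g * star g)) := qmul_le_left _ hr
      _ = (g * star g) * h * (g * star g) := by simp [mul_assoc]

end helpers

/-- For a partial unit `f` in a strongly Gelfand quantale, `h ↦ f* h f` is a frame
isomorphism from `Q_{d(f)} = {k : k ≤ f f*}` onto `Q_{r(f)} = {k : k ≤ f* f}`, with
inverse `k ↦ f k f*`: both maps are well defined, mutually inverse, monotone, and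
preserve arbitrary joins (hence they form a frame isomorphism). -/
theorem stmt10 (Q : Type*) [UIQuantale Q] (sg : ∀ a : Q, a ≤ a * star a * a)
    (f : Q) (hf : IsPU f) :
    (∀ h : Q, h ≤ f * star f → star f * h * f ≤ star f * f) ∧
    (∀ k : Q, k ≤ star f * f → f * k * star f ≤ f * star f) ∧
    (∀ h : Q, h ≤ f * star f → f * (star f * h * f) * star f = h) ∧
    (∀ k : Q, k ≤ star f * f → star f * (f * k * star f) * f = k) ∧
    (∀ h h' : Q, h ≤ f * star f → h' ≤ f * star f → h ≤ h' →
      star f * h * f ≤ star f * h' * f) ∧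
    (∀ k k' : Q, k ≤ star f * f → k' ≤ star f * f → k ≤ k' →
      f * k * star f ≤ f * k' * star f) ∧
    (∀ S : Set Q, (∀ h ∈ S, h ≤ f * star f) →
      star f * sSup S * f = ⨆ h ∈ S, star f * h * f) := by
  obtain ⟨h1, h2⟩ := hf
  refine ⟨?_, ?_, ?_, ?_, ?_, ?_, ?_⟩
  · intro h hh
    calc star f * h * f ≤ star f * (f * star f) * f :=
          qmul_le_right f (qmul_le_left _ hh)
      _ = (star f * f) * (star f * f) := by simp [mul_assoc]
      _ ≤ 1 * (star f * f) := qmul_le_right _ h1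
      _ = star f * f := one_mul _
  · intro k hk
    calc f * k * star f ≤ f * (star f * f) * star f :=
          qmul_le_right _ (qmul_le_left _ hk)
      _ = (f * star f) * (f * star f) := by simp [mul_assoc]
      _ ≤ 1 * (f * star f) := qmul_le_right _ h2
      _ = f * star f := one_mul _
  · intro h hh
    have := q_sandwich sg h1 h2 hh
    calc f * (star f * h * f) * star f = (f * star f) * h * (f * star f) := by
          simp [mul_assoc]
      _ = h := this
  · intro k hk
    have hk' : k ≤ star f * star (star f) := by rwa [star_star]
    have := q_sandwich sg (g := star f) (by rwa [star_star]) (by rwa [star_star]) hk'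
    rw [star_star] at this
    calc star f * (f * k * star f) * f = (star f * f) * k * (star f * f) := by
          simp [mul_assoc]
      _ = k := this
  · intro h h' _ _ hle
    exact qmul_le_right _ (qmul_le_left _ hle)
  · intro k k' _ _ hle
    exact qmul_le_right _ (qmul_le_left _ hle)
  · intro S _
    have e1 : star f * sSup S = sSup ((fun b => star f * b) '' S) := by
      rw [sSup_image]; exact UIQuantale.mul_sSup _ _
    rw [e1, UIQuantale.sSup_mul, iSup_image]
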